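/- Let X : Ω → ℝ^p be an integrable random vector, α, β₀ ∈ ℝ^p, and let B⊤X = (⟨α, X⟩, ⟨β₀, X⟩) ∈ ℝ². Suppose the linear conditional mean assumption holds: E[X | B⊤X] = D · (B⊤X) almost surely for a non-random matrix D ∈ ℝ^{p×2}. Let μ' : ℝ → ℝ be Borel measurable with E[‖X‖₂ · |μ'(⟨β₀, X⟩)|] < ∞. Then for every t ∈ ℝ: E[X · μ'(⟨β₀, X⟩) · 1{⟨α, X⟩ ≤ t}] = D · E[(B⊤X) · μ'(⟨β₀, X⟩) · 1{⟨α, X⟩ ≤ t}], i.e., the shift function factors as M(t) = D M₀(t) with M₀(t) = E[B⊤X μ'(β₀⊤X) 1{α⊤X ≤ t}] ∈ ℝ². -/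

import Mathlib

/-! The multiplier `μ'(⟨β₀, X⟩)` and the event `{⟨α, X⟩ ≤ t}` are both measurable with respect
to `σ(BᵀX)`, so by the pull-out property `X i` may be replaced inside the integral by
`E[X i | BᵀX] = (D BᵀX) i`; linearity of the integral then moves `D` outside. -/

open MeasureTheory
open scoped RealInnerProductSpace

section

variable {Ω : Type*} {m m₀ : MeasurableSpace Ω} {μ : Measure Ω}

theorem setIntegral_condExp_mul_of_stronglyMeasurable (hm : m ≤ m₀) [SigmaFinite (μ.trim hm)]
    {f g : Ω → ℝ} {s : Set Ω} (hg : StronglyMeasurable[m] g)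
    (hfg : Integrable (fun ω => f ω * g ω) μ) (hf : Integrable f μ) (hs : MeasurableSet[m] s) :
    ∫ ω in s, μ[f | m] ω * g ω ∂μ = ∫ ω in s, f ω * g ω ∂μ := by
  refine (setIntegral_congr_ae (hm s hs) ?_).trans (setIntegral_condExp hm hfg hs)
  exact (condExp_mul_of_stronglyMeasurable_right hg hfg hf).mono fun _ hω _ => hω.symm

end

section

variable {Ω : Type*} [MeasurableSpace Ω] {μ : Measure Ω}

theorem integrable_clm_apply_mul {E : Type*} [NormedAddCommGroup E] [NormedSpace ℝ E]
    (L : E →L[ℝ] ℝ) {X : Ω → E} {c : Ω → ℝ} (hX : AEStronglyMeasurable X μ)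
    (hc : AEStronglyMeasurable c μ) (h : Integrable (fun ω => ‖X ω‖ * |c ω|) μ) :
    Integrable (fun ω => L (X ω) * c ω) μ := by
  refine (h.const_mul ‖L‖).mono' ((L.continuous.comp_aestronglyMeasurable hX).mul hc)
    (Filter.Eventually.of_forall fun ω => ?_)
  rw [norm_mul, Real.norm_eq_abs (c ω), ← mul_assoc]
  exact mul_le_mul_of_nonneg_right (L.le_opNorm (X ω)) (abs_nonneg _)

theorem integral_mulVec_apply {ι κ : Type*} [Fintype ι] (D : Matrix κ ι ℝ) {v : Ω → ι → ℝ}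
    (hv : ∀ j, Integrable (fun ω => v ω j) μ) (i : κ) :
    ∫ ω, D.mulVec (v ω) i ∂μ = D.mulVec (fun j => ∫ ω, v ω j ∂μ) i := by
  simp only [Matrix.mulVec, dotProduct]
  rw [integral_finsetSum _ fun j _ => (hv j).const_mul _]
  simp_rw [integral_const_mul]

end

/-- Factorization of the shift function under the linear conditional mean assumption
(Condition (A4)): if `E[X | BᵀX] = D · (BᵀX)` a.s. (componentwise), where
`BᵀX = (⟨α, X⟩, ⟨β₀, X⟩)`, and `E[‖X‖₂ |μ'(⟨β₀, X⟩)|] < ∞`, then for every `t ∈ ℝ`,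
`E[X μ'(⟨β₀, X⟩) 1{⟨α, X⟩ ≤ t}] = D · E[(BᵀX) μ'(⟨β₀, X⟩) 1{⟨α, X⟩ ≤ t}]`,
i.e. `M(t) = D M₀(t)`. -/
theorem shift_function_factorization
    {Ω : Type*} [MeasurableSpace Ω] (μ : Measure Ω) [IsProbabilityMeasure μ]
    {p : ℕ} (X : Ω → EuclideanSpace ℝ (Fin p)) (hX : Measurable X)
    (hXint : Integrable X μ)
    (α β₀ : EuclideanSpace ℝ (Fin p))
    (D : Matrix (Fin p) (Fin 2) ℝ)
    (hlin : ∀ i : Fin p,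
      μ[fun ω => X ω i |
          MeasurableSpace.comap (fun ω => (⟪α, X ω⟫, ⟪β₀, X ω⟫)) inferInstance]
        =ᵐ[μ] fun ω => D.mulVec ![⟪α, X ω⟫, ⟪β₀, X ω⟫] i)
    (μ' : ℝ → ℝ) (hμ' : Measurable μ')
    (hint : Integrable (fun ω => ‖X ω‖ * |μ' ⟪β₀, X ω⟫|) μ) :
    ∀ t : ℝ, ∀ i : Fin p,
      ∫ ω in {ω | ⟪α, X ω⟫ ≤ t}, X ω i * μ' ⟪β₀, X ω⟫ ∂μ
        = D.mulVec
            (fun j => ∫ ω in {ω | ⟪α, X ω⟫ ≤ t},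
              (![⟪α, X ω⟫, ⟪β₀, X ω⟫] j) * μ' ⟪β₀, X ω⟫ ∂μ) i := by
  intro t i
  set BX : Ω → ℝ × ℝ := fun ω => (⟪α, X ω⟫, ⟪β₀, X ω⟫)
  have hm : MeasurableSpace.comap BX inferInstance ≤ ‹_› :=
    ((measurable_const.inner hX).prodMk (measurable_const.inner hX)).comap_le
  have hBX := comap_measurable (m := inferInstance) BX
  have hg := (hμ'.comp (measurable_snd.comp hBX)).stronglyMeasurable
  have hs : MeasurableSet[MeasurableSpace.comap BX inferInstance] {ω | ⟪α, X ω⟫ ≤ t} :=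
    measurableSet_le (measurable_fst.comp hBX) measurable_const
  have hc : AEStronglyMeasurable (fun ω => μ' ⟪β₀, X ω⟫) μ := (hg.mono hm).aestronglyMeasurable
  have hXi : Integrable (fun ω => X ω i) μ :=
    (EuclideanSpace.proj (𝕜 := ℝ) i).integrable_comp hXint
  have hXi_mul : Integrable (fun ω => X ω i * μ' ⟪β₀, X ω⟫) μ :=
    integrable_clm_apply_mul (EuclideanSpace.proj (𝕜 := ℝ) i) hX.aestronglyMeasurable hc hint
  have hB : ∀ j, Integrable (fun ω => ![⟪α, X ω⟫, ⟪β₀, X ω⟫] j * μ' ⟪β₀, X ω⟫) μ :=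
    Fin.forall_fin_two.mpr
      ⟨integrable_clm_apply_mul (innerSL ℝ α) hX.aestronglyMeasurable hc hint,
        integrable_clm_apply_mul (innerSL ℝ β₀) hX.aestronglyMeasurable hc hint⟩
  calc ∫ ω in {ω | ⟪α, X ω⟫ ≤ t}, X ω i * μ' ⟪β₀, X ω⟫ ∂μ
      = ∫ ω in {ω | ⟪α, X ω⟫ ≤ t},
          μ[fun ω => X ω i | MeasurableSpace.comap BX inferInstance] ω * μ' ⟪β₀, X ω⟫ ∂μ :=
        (setIntegral_condExp_mul_of_stronglyMeasurable hm hg hXi_mul hXi hs).symm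
    _ = ∫ ω in {ω | ⟪α, X ω⟫ ≤ t},
          D.mulVec (fun j => ![⟪α, X ω⟫, ⟪β₀, X ω⟫] j * μ' ⟪β₀, X ω⟫) i ∂μ := by
        refine integral_congr_ae ?_
        filter_upwards [ae_restrict_of_ae (hlin i)] with ω hω
        rw [hω]
        simp only [Matrix.mulVec, dotProduct, Finset.sum_mul, mul_assoc]
    _ = _ := integral_mulVec_apply D (fun j => (hB j).integrableOn) i
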